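/- The boundaries of two tubes forming a single intersection meet in at most four points: if tube T₁ and tube T₂ are convex quadrilaterals (convex hulls of vertical segments in general position) such that exactly one defining vertical segment of T₁ intersects T₂ and no defining segment of T₂ intersects T₁, then ∂T₁ ∩ ∂T₂ has at most four points. -/

import Mathlib

/-!
Every point of `∂T₁` lies in `T₁`, which misses both vertical sides of `T₂`, so every common
boundary point lies on the lower or the upper edge of `T₂`. A segment contains at most two
points of the common frontier of two convex sets unless it contains infinitely many: if a
frontier point lies strictly between two others, the whole open segment between them lies in
both frontiers, because a single interior point on it would make every point of it interior.
-/

open Set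

/-- A vertical segment in the plane: {x} × [a,b]. -/
def VSeg (x a b : ℝ) : Set (ℝ × ℝ) := {x} ×ˢ Set.Icc a b

theorem openSegment_infinite {E : Type*} [AddCommGroup E] [Module ℝ E] {u w : E} (h : u ≠ w) :
    (openSegment ℝ u w).Infinite := by
  rw [openSegment_eq_image_lineMap]
  exact (Ioo_infinite zero_lt_one).image (AffineMap.lineMap_injective ℝ h).injOn

section ConvexFrontier

variable {E : Type*} [AddCommGroup E] [Module ℝ E] [TopologicalSpace E]
  [IsTopologicalAddGroup E] [ContinuousConstSMul ℝ E] {K : Set E} {u v w : E}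

theorem Convex.openSegment_subset_interior_of_mem (hK : Convex ℝ K) (hu : u ∈ closure K)
    (hw : w ∈ closure K) (hv : v ∈ openSegment ℝ u w) (hvK : v ∈ interior K) :
    openSegment ℝ u w ⊆ interior K := by
  have hv_line : v ∈ range (AffineMap.lineMap u w : ℝ → E) := by
    rw [openSegment_eq_image_lineMap] at hv
    exact image_subset_range _ _ hv
  refine (openSegment_subset_union u w hv_line).trans
    (insert_subset_iff.2 ⟨hvK, union_subset ?_ ?_⟩)
  · rw [openSegment_symm]
    exact hK.openSegment_interior_closure_subset_interior hvK hu
  · exact hK.openSegment_interior_closure_subset_interior hvK hw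

theorem Convex.openSegment_subset_frontier (hK : Convex ℝ K) (hu : u ∈ frontier K)
    (hw : w ∈ frontier K) (hv : v ∈ openSegment ℝ u w) (hvK : v ∈ frontier K) :
    openSegment ℝ u w ⊆ frontier K := fun _ hz =>
  ⟨hK.closure.openSegment_subset hu.1 hw.1 hz,
    fun hzK => hvK.2 (hK.openSegment_subset_interior_of_mem hu.1 hw.1 hz hzK hv)⟩

theorem encard_segment_inter_frontier_inter_frontier_le_two {K₁ K₂ : Set E}
    (hK₁ : Convex ℝ K₁) (hK₂ : Convex ℝ K₂) (a b : E)
    (hfin : (segment ℝ a b ∩ (frontier K₁ ∩ frontier K₂)).Finite) :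
    (segment ℝ a b ∩ (frontier K₁ ∩ frontier K₂)).encard ≤ 2 := by
  set S := segment ℝ a b ∩ (frontier K₁ ∩ frontier K₂)
  have no_between : ∀ u ∈ S, ∀ v ∈ S, ∀ w ∈ S, u ≠ w → v ∉ openSegment ℝ u w := by
    intro u hu v hv w hw huw hv_mem
    have hsub : openSegment ℝ u w ⊆ S := fun z hz =>
      ⟨(convex_segment a b).openSegment_subset hu.1 hw.1 hz,
        hK₁.openSegment_subset_frontier hu.2.1 hw.2.1 hv_mem hv.2.1 hz,
        hK₂.openSegment_subset_frontier hu.2.2 hw.2.2 hv_mem hv.2.2 hz⟩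
    exact openSegment_infinite huw (hfin.subset hsub)
  by_contra! hlt
  rw [← hfin.cast_ncard_eq, Nat.ofNat_lt_cast, two_lt_ncard_iff hfin] at hlt
  obtain ⟨u, v, w, hu, hv, hw, huv, huw, hvw⟩ := hlt
  have hcol : Collinear ℝ ({u, v, w} : Set E) :=
    collinear_triple_of_mem_affineSpan_pair (mem_segment_iff_wbtw.1 hu.1).mem_affineSpan
      (mem_segment_iff_wbtw.1 hv.1).mem_affineSpan (mem_segment_iff_wbtw.1 hw.1).mem_affineSpan
  rcases hcol.wbtw_or_wbtw_or_wbtw with h | h | h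
  · exact no_between u hu v hv w hw huw
      (mem_openSegment_of_ne_left_right huv hvw.symm h.mem_segment)
  · exact no_between v hv w hw u hu huv.symm
      (mem_openSegment_of_ne_left_right hvw huw h.mem_segment)
  · exact no_between w hw u hu v hv hvw.symm
      (mem_openSegment_of_ne_left_right huw.symm huv.symm h.mem_segment)

end ConvexFrontier

noncomputable def lineThrough (s t a b x : ℝ) : ℝ := a + (x - s) / (t - s) * (b - a)

section LineThrough

variable {s t a b : ℝ}

@[simp] theorem lineThrough_left : lineThrough s t a b s = a := by simp [lineThrough]

theorem lineThrough_right (h : s ≠ t) : lineThrough s t a b t = b := by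
  simp [lineThrough, div_self (sub_ne_zero.2 h.symm)]

theorem lineThrough_combo {x y c d : ℝ} (hcd : c + d = 1) :
    lineThrough s t a b (c * x + d * y) = c * lineThrough s t a b x + d * lineThrough s t a b y := by
  obtain rfl : d = 1 - c := by linarith
  simp only [lineThrough]
  ring

theorem continuous_lineThrough : Continuous (lineThrough s t a b) := by
  unfold lineThrough
  fun_prop

theorem mk_lineThrough_mem_segment (hst : s < t) {x : ℝ} (hx : x ∈ Icc s t) :
    (x, lineThrough s t a b x) ∈ segment ℝ (s, a) (t, b) := by
  have hts : 0 < t - s := sub_pos.2 hst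
  rw [segment_eq_image_lineMap]
  refine ⟨(x - s) / (t - s), ⟨div_nonneg (by linarith [hx.1]) hts.le,
    (div_le_one hts).2 (by linarith [hx.2])⟩, ?_⟩
  ext
  · simp [AffineMap.lineMap_apply, div_mul_cancel₀ _ hts.ne']
  · simp [AffineMap.lineMap_apply, lineThrough]; ring

end LineThrough

def tube (s t α β γ δ : ℝ) : Set (ℝ × ℝ) :=
  {p | p.1 ∈ Icc s t ∧ p.2 ∈ Icc (lineThrough s t α γ p.1) (lineThrough s t β δ p.1)}

section Tube

variable {s t α β γ δ : ℝ}

theorem convex_tube : Convex ℝ (tube s t α β γ δ) := by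
  rintro p ⟨⟨hp₁, hp₂⟩, hp₃, hp₄⟩ q ⟨⟨hq₁, hq₂⟩, hq₃, hq₄⟩ c d hc hd hcd
  obtain rfl : d = 1 - c := by linarith
  refine ⟨⟨?_, ?_⟩, ?_, ?_⟩ <;>
    simp only [Prod.fst_add, Prod.snd_add, Prod.smul_fst, Prod.smul_snd, smul_eq_mul,
      lineThrough_combo hcd] <;>
    nlinarith

theorem vSeg_eq_segment {x a b : ℝ} (h : a ≤ b) : VSeg x a b = segment ℝ (x, a) (x, b) := by
  rw [VSeg, singleton_prod, ← segment_eq_Icc h, Prod.image_mk_segment_right]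

theorem isClosed_convexHull_vSeg_union {x₁ a₁ b₁ x₂ a₂ b₂ : ℝ} (h₁ : a₁ ≤ b₁) (h₂ : a₂ ≤ b₂) :
    IsClosed (convexHull ℝ (VSeg x₁ a₁ b₁ ∪ VSeg x₂ a₂ b₂)) := by
  rw [vSeg_eq_segment h₁, vSeg_eq_segment h₂, ← convexHull_pair, ← convexHull_pair,
    convexHull_convexHull_union_left, convexHull_convexHull_union_right]
  exact (toFinite _).isClosed_convexHull ℝ

theorem convexHull_vSeg_union_eq_tube (hst : s < t) (hαβ : α ≤ β) (hγδ : γ ≤ δ) :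
    convexHull ℝ (VSeg s α β ∪ VSeg t γ δ) = tube s t α β γ δ := by
  set T := convexHull ℝ (VSeg s α β ∪ VSeg t γ δ)
  refine (convexHull_min ?_ convex_tube).antisymm ?_
  · rintro p (⟨hp₁, hp₂⟩ | ⟨hp₁, hp₂⟩) <;> rw [mem_singleton_iff] at hp₁ <;>
      simp [tube, hp₁, lineThrough_right hst.ne, hst.le, hp₂.1, hp₂.2]
  · have edge_subset : ∀ {μ ν : ℝ}, μ ∈ Icc α β → ν ∈ Icc γ δ → segment ℝ (s, μ) (t, ν) ⊆ T :=
      fun hμ hν => segment_subset_convexHull (.inl ⟨rfl, hμ⟩) (.inr ⟨rfl, hν⟩)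
    rintro ⟨x, y⟩ ⟨hx, hy⟩
    have hlow := edge_subset ⟨le_rfl, hαβ⟩ ⟨le_rfl, hγδ⟩ (mk_lineThrough_mem_segment hst hx)
    have hupp := edge_subset ⟨hαβ, le_rfl⟩ ⟨hγδ, le_rfl⟩ (mk_lineThrough_mem_segment hst hx)
    refine (convex_convexHull ℝ _).segment_subset hlow hupp ?_
    rw [← Prod.image_mk_segment_right, segment_eq_Icc (hy.1.trans hy.2)]
    exact ⟨y, hy, rfl⟩

theorem frontier_convexHull_vSeg_union_subset (hst : s < t) (hαβ : α ≤ β) (hγδ : γ ≤ δ) :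
    frontier (convexHull ℝ (VSeg s α β ∪ VSeg t γ δ)) ⊆
      VSeg s α β ∪ VSeg t γ δ ∪ (segment ℝ (s, α) (t, γ) ∪ segment ℝ (s, β) (t, δ)) := by
  have hclosed := isClosed_convexHull_vSeg_union (x₁ := s) (x₂ := t) hαβ hγδ
  rw [convexHull_vSeg_union_eq_tube hst hαβ hγδ] at hclosed ⊢
  rintro ⟨x, y⟩ hp
  obtain ⟨⟨hsx, hxt⟩, hlo, hhi⟩ : x ∈ Icc s t ∧
      y ∈ Icc (lineThrough s t α γ x) (lineThrough s t β δ x) := hclosed.frontier_subset hp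
  by_contra hnot_edge
  simp only [mem_union, not_or] at hnot_edge
  obtain ⟨⟨hleft, hright⟩, hlower, hupper⟩ := hnot_edge
  rcases hsx.eq_or_lt with rfl | hsx'
  · exact hleft ⟨rfl, by simpa using hlo, by simpa using hhi⟩
  rcases hxt.eq_or_lt with rfl | hxt'
  · exact hright ⟨rfl, by simpa [lineThrough_right hst.ne] using hlo,
      by simpa [lineThrough_right hst.ne] using hhi⟩
  rcases hlo.eq_or_lt with rfl | hlo'
  · exact hlower (mk_lineThrough_mem_segment hst ⟨hsx, hxt⟩)
  rcases hhi.eq_or_lt with rfl | hhi'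
  · exact hupper (mk_lineThrough_mem_segment hst ⟨hsx, hxt⟩)
  refine hp.2 (mem_interior_iff_mem_nhds.2 ?_)
  have hcont (a b : ℝ) : ContinuousAt (fun q : ℝ × ℝ => lineThrough s t a b q.1) (x, y) :=
    (continuous_lineThrough.comp continuous_fst).continuousAt
  filter_upwards [continuousAt_const.eventually_lt continuousAt_fst hsx',
    continuousAt_fst.eventually_lt continuousAt_const hxt',
    (hcont α γ).eventually_lt continuousAt_snd hlo',
    continuousAt_snd.eventually_lt (hcont β δ) hhi']
    with q h₁ h₂ h₃ h₄ using ⟨⟨h₁.le, h₂.le⟩, h₃.le, h₄.le⟩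

end Tube

theorem encard_frontier_inter_frontier_convexHull_vSeg_union_le_four {K : Set (ℝ × ℝ)}
    {s t α β γ δ : ℝ} (hK : Convex ℝ K) (hKc : IsClosed K) (hst : s < t) (hαβ : α ≤ β)
    (hγδ : γ ≤ δ) (hs : Disjoint (VSeg s α β) K) (ht : Disjoint (VSeg t γ δ) K)
    (hfin : (frontier K ∩ frontier (convexHull ℝ (VSeg s α β ∪ VSeg t γ δ))).Finite) :
    (frontier K ∩ frontier (convexHull ℝ (VSeg s α β ∪ VSeg t γ δ))).encard ≤ 4 := by
  set S := frontier K ∩ frontier (convexHull ℝ (VSeg s α β ∪ VSeg t γ δ))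
  have hcover : S ⊆ (segment ℝ (s, α) (t, γ) ∩ S) ∪ (segment ℝ (s, β) (t, δ) ∩ S) := by
    intro p hp
    have hpK : p ∈ K := hKc.frontier_subset hp.1
    rcases frontier_convexHull_vSeg_union_subset hst hαβ hγδ hp.2 with (h | h) | h | h
    · exact (hs.notMem_of_mem_left h hpK).elim
    · exact (ht.notMem_of_mem_left h hpK).elim
    · exact .inl ⟨h, hp⟩
    · exact .inr ⟨h, hp⟩
  have hsegment (a b : ℝ × ℝ) : (segment ℝ a b ∩ S).encard ≤ 2 :=
    encard_segment_inter_frontier_inter_frontier_le_two hK (convex_convexHull ℝ _) a b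
      (hfin.subset inter_subset_right)
  calc S.encard ≤ (segment ℝ (s, α) (t, γ) ∩ S).encard + (segment ℝ (s, β) (t, δ) ∩ S).encard :=
        (encard_le_encard hcover).trans (encard_union_le _ _)
    _ ≤ 2 + 2 := add_le_add (hsegment _ _) (hsegment _ _)
    _ = 4 := by norm_num

theorem singleIntersection_boundaries_meet_in_at_most_four_points_general
    (x₁ a₁ b₁ x₂ a₂ b₂ x₃ a₃ b₃ x₄ a₄ b₄ : ℝ)
    (hx₃₄ : x₃ ≠ x₄)
    (h₁ : a₁ ≤ b₁) (h₂ : a₂ ≤ b₂) (h₃ : a₃ ≤ b₃) (h₄ : a₄ ≤ b₄)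
    (T₁ T₂ : Set (ℝ × ℝ))
    (hT₁ : T₁ = convexHull ℝ (VSeg x₁ a₁ b₁ ∪ VSeg x₂ a₂ b₂))
    (hT₂ : T₂ = convexHull ℝ (VSeg x₃ a₃ b₃ ∪ VSeg x₄ a₄ b₄))
    -- single intersection: exactly one defining segment of T₁ meets T₂,
    -- and no defining segment of T₂ meets T₁:
    (hsingle₃ : VSeg x₃ a₃ b₃ ∩ T₁ = ∅)
    (hsingle₄ : VSeg x₄ a₄ b₄ ∩ T₁ = ∅)
    -- transversality: the boundary intersection is finite:
    (htrans : (frontier T₁ ∩ frontier T₂).Finite) :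
    (frontier T₁ ∩ frontier T₂).encard ≤ 4 := by
  have hT₁_convex : Convex ℝ T₁ := hT₁ ▸ convex_convexHull ℝ _
  have hT₁_closed : IsClosed T₁ := hT₁ ▸ isClosed_convexHull_vSeg_union h₁ h₂
  rw [← disjoint_iff_inter_eq_empty] at hsingle₃ hsingle₄
  subst hT₂
  rcases hx₃₄.lt_or_gt with h | h
  · exact encard_frontier_inter_frontier_convexHull_vSeg_union_le_four hT₁_convex hT₁_closed h
      h₃ h₄ hsingle₃ hsingle₄ htrans
  · rw [union_comm] at htrans ⊢
    exact encard_frontier_inter_frontier_convexHull_vSeg_union_le_four hT₁_convex hT₁_closed h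
      h₄ h₃ hsingle₄ hsingle₃ htrans

/-- The boundaries of two tubes forming a single intersection meet in at most four
points. `T₁` is the tube of the vertical segments `I₁, I₂`; `T₂` of `J₁, J₂`;
exactly one defining segment of `T₁` (say `I₁`) meets `T₂`, and no defining segment
of `T₂` meets `T₁`. General position: no segment endpoint lies on the boundary of the
other tube, and the boundaries cross transversally (in particular their intersection
is finite). -/
theorem singleIntersection_boundaries_meet_in_at_most_four_points
    (x₁ a₁ b₁ x₂ a₂ b₂ x₃ a₃ b₃ x₄ a₄ b₄ : ℝ)
    (hx₁₂ : x₁ ≠ x₂) (hx₃₄ : x₃ ≠ x₄)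
    (h₁ : a₁ ≤ b₁) (h₂ : a₂ ≤ b₂) (h₃ : a₃ ≤ b₃) (h₄ : a₄ ≤ b₄)
    (T₁ T₂ : Set (ℝ × ℝ))
    (hT₁ : T₁ = convexHull ℝ (VSeg x₁ a₁ b₁ ∪ VSeg x₂ a₂ b₂))
    (hT₂ : T₂ = convexHull ℝ (VSeg x₃ a₃ b₃ ∪ VSeg x₄ a₄ b₄))
    -- single intersection: exactly one defining segment of T₁ meets T₂,
    -- and no defining segment of T₂ meets T₁:
    (hsingle₁ : (VSeg x₁ a₁ b₁ ∩ T₂).Nonempty)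
    (hsingle₂ : VSeg x₂ a₂ b₂ ∩ T₂ = ∅)
    (hsingle₃ : VSeg x₃ a₃ b₃ ∩ T₁ = ∅)
    (hsingle₄ : VSeg x₄ a₄ b₄ ∩ T₁ = ∅)
    -- general position: no segment endpoint on the other tube's boundary:
    (hgen₁ : ∀ e ∈ ({(x₁, a₁), (x₁, b₁), (x₂, a₂), (x₂, b₂)} : Set (ℝ × ℝ)),
      e ∉ frontier T₂)
    (hgen₂ : ∀ e ∈ ({(x₃, a₃), (x₃, b₃), (x₄, a₄), (x₄, b₄)} : Set (ℝ × ℝ)),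
      e ∉ frontier T₁)
    -- transversality: the boundary intersection is finite:
    (htrans : (frontier T₁ ∩ frontier T₂).Finite) :
    (frontier T₁ ∩ frontier T₂).encard ≤ 4 :=
  singleIntersection_boundaries_meet_in_at_most_four_points_general x₁ a₁ b₁ x₂ a₂ b₂ x₃ a₃ b₃ x₄ a₄
    b₄ hx₃₄ h₁ h₂ h₃ h₄ T₁ T₂ hT₁ hT₂ hsingle₃ hsingle₄ htrans
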